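/- arXiv:2008.11144 — 6 statements merged into one kernel-verified Lean document; each statement's English description precedes it below -/
import Mathlib

section
/- Let M > 1 and let Ω ⊆ ℝⁿ be an M-uniform domain with |Ω| ≥ c₀ > 0. Then there exists r₀ > 0 depending only on M, n, c₀ such that Ω contains an open ball of radius r₀. -/
open MeasureTheory Metric Set

/-- A connected open set `Ω` is `M`-uniform if any two points of its closure can be joined
by a rectifiable curve in the closure of length at most `M` times their distance, which
stays at distance from the boundary at least `1/M` times the minimum of the distances to
the two endpoints. -/
def IsMUniform {n : ℕ} (M : ℝ) (Ω : Set (EuclideanSpace ℝ (Fin n))) : Prop :=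
  IsOpen Ω ∧ IsConnected Ω ∧
  ∀ x₁ ∈ closure Ω, ∀ x₂ ∈ closure Ω, ∃ γ : ℝ → EuclideanSpace ℝ (Fin n),
    ContinuousOn γ (Set.Icc 0 1) ∧ γ 0 = x₁ ∧ γ 1 = x₂ ∧
    (∀ t ∈ Set.Icc (0:ℝ) 1, γ t ∈ closure Ω) ∧
    eVariationOn γ (Set.Icc 0 1) ≤ ENNReal.ofReal (M * dist x₁ x₂) ∧
    (∀ t ∈ Set.Icc (0:ℝ) 1,
      Metric.infDist (γ t) (frontier Ω) ≥ (1 / M) * min (dist (γ t) x₁) (dist (γ t) x₂))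

open Filter Topology

/-!
Two points of `Ω` at distance `D` are joined by a uniform curve; its point at distance `D / 2`
from the first endpoint is at distance at least `D / (2M)` from `∂Ω`, so `Ω` contains a ball of
that radius. Since `|Ω| ≥ c₀` and small balls have small volume, `Ω` cannot lie in a closed
ball of some radius `d = d(n, c₀) > 0`, so it has two points at distance more than `d`.
-/

lemma ball_infDist_frontier_subset_interior {E : Type*} [NormedAddCommGroup E]
    [NormedSpace ℝ E] {s : Set E} {z : E} (hz : z ∈ closure s) :
    ball z (infDist z (frontier s)) ⊆ interior s := by
  set r := infDist z (frontier s)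
  have hint : closure s ∩ ball z r ⊆ interior s := fun w ⟨hws, hw⟩ =>
    closure_sdiff_frontier s ▸
      ⟨hws, fun hwf => (infDist_le_dist_of_mem hwf).not_gt (mem_ball'.1 hw)⟩
  rcases le_or_gt r 0 with hr | hr
  · simp [ball_eq_empty.2 hr]
  refine (convex_ball z r).isPreconnected.subset_of_closure_inter_subset isOpen_interior
    ⟨z, mem_ball_self hr, hint ⟨hz, mem_ball_self hr⟩⟩ ?_
  exact (inter_subset_inter_left _ (closure_mono interior_subset)).trans hint

lemma exists_half_dist_le_min_dist {α : Type*} [PseudoMetricSpace α] {γ : ℝ → α}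
    (hγ : ContinuousOn γ (Icc 0 1)) :
    ∃ t ∈ Icc (0 : ℝ) 1, dist (γ 0) (γ 1) / 2 ≤ min (dist (γ t) (γ 0)) (dist (γ t) (γ 1)) := by
  set D := dist (γ 0) (γ 1)
  have hD : D / 2 ∈ Icc (dist (γ 0) (γ 0)) (dist (γ 1) (γ 0)) := by
    rw [dist_self, dist_comm]
    constructor <;> linarith [dist_nonneg (x := γ 0) (y := γ 1)]
  obtain ⟨t, ht, hmid⟩ := intermediate_value_Icc zero_le_one
    ((continuous_id.dist continuous_const).comp_continuousOn hγ) hD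
  refine ⟨t, ht, le_min hmid.ge ?_⟩
  have := dist_triangle_left (γ 0) (γ 1) (γ t)
  simp only [Function.comp_apply, id] at hmid
  linarith

theorem IsMUniform.exists_ball_subset {n : ℕ} {M : ℝ} {Ω : Set (EuclideanSpace ℝ (Fin n))}
    (hΩ : IsMUniform M Ω) (hM : 0 < M) {x₁ x₂ : EuclideanSpace ℝ (Fin n)}
    (hx₁ : x₁ ∈ closure Ω) (hx₂ : x₂ ∈ closure Ω) :
    ∃ z, ball z (dist x₁ x₂ / (2 * M)) ⊆ Ω := by
  obtain ⟨γ, hγc, rfl, rfl, hγΩ, -, hγ⟩ := hΩ.2.2 x₁ hx₁ x₂ hx₂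
  obtain ⟨t, ht, hmid⟩ := exists_half_dist_le_min_dist hγc
  have hr : dist (γ 0) (γ 1) / (2 * M) ≤ infDist (γ t) (frontier Ω) :=
    calc dist (γ 0) (γ 1) / (2 * M) = 1 / M * (dist (γ 0) (γ 1) / 2) := by field_simp
      _ ≤ 1 / M * min (dist (γ t) (γ 0)) (dist (γ t) (γ 1)) := by gcongr
      _ ≤ infDist (γ t) (frontier Ω) := hγ t ht
  exact ⟨γ t, (ball_subset_ball hr).trans
    ((ball_infDist_frontier_subset_interior (hγΩ t ht)).trans interior_subset)⟩

lemma exists_lt_dist_of_measure_closedBall_lt {α : Type*} [PseudoMetricSpace α]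
    [MeasurableSpace α] {μ : Measure α} {s : Set α} {d : ℝ} (hs : s.Nonempty)
    (h : ∀ x ∈ s, μ (closedBall x d) < μ s) : ∃ x ∈ s, ∃ y ∈ s, d < dist x y := by
  obtain ⟨x, hx⟩ := hs
  by_contra! hnear
  have hsub : s ⊆ closedBall x d := fun y hy => by
    rw [mem_closedBall, dist_comm]
    exact hnear x hx y hy
  exact (h x hx).not_ge (measure_mono hsub)

lemma exists_pos_forall_measure_closedBall_lt {E : Type*} [NormedAddCommGroup E]
    [NormedSpace ℝ E] [Nontrivial E] [FiniteDimensional ℝ E] [MeasurableSpace E] [BorelSpace E]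
    (μ : Measure E) [μ.IsAddHaarMeasure] {ε : ENNReal} (hε : 0 < ε) :
    ∃ d > 0, ∀ x, μ (closedBall x d) < ε := by
  have hlim : Tendsto (fun r => μ (cthickening r {(0 : E)})) (𝓝[>] 0) (𝓝 0) := by
    simpa using tendsto_nhdsWithin_of_tendsto_nhds
      (tendsto_measure_cthickening_of_isCompact (μ := μ) isCompact_singleton)
  obtain ⟨d, hsmall, hd⟩ :=
    ((hlim.eventually (gt_mem_nhds hε)).and self_mem_nhdsWithin).exists
  refine ⟨d, hd, fun x => ?_⟩
  rwa [Measure.addHaar_closedBall_center, ← cthickening_singleton _ (le_of_lt hd)]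

theorem MUniform_contains_ball (n : ℕ) (M c₀ : ℝ) (hM : 1 < M) (hc₀ : 0 < c₀) :
    ∃ r₀ : ℝ, 0 < r₀ ∧ ∀ Ω : Set (EuclideanSpace ℝ (Fin n)),
      IsMUniform M Ω → ENNReal.ofReal c₀ ≤ volume Ω →
      ∃ z, Metric.ball z r₀ ⊆ Ω := by
  rcases subsingleton_or_nontrivial (EuclideanSpace ℝ (Fin n)) with hE | hE
  · exact ⟨1, one_pos, fun Ω hΩ _ => ⟨0, hΩ.2.1.nonempty.eq_univ ▸ subset_univ _⟩⟩
  have hM₀ : 0 < M := zero_lt_one.trans hM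
  obtain ⟨d, hd, hsmall⟩ :=
    exists_pos_forall_measure_closedBall_lt (volume : Measure (EuclideanSpace ℝ (Fin n)))
      (ENNReal.ofReal_pos.2 hc₀)
  refine ⟨d / (2 * M), by positivity, fun Ω hΩ hvol => ?_⟩
  obtain ⟨x₁, hx₁, x₂, hx₂, hfar⟩ := exists_lt_dist_of_measure_closedBall_lt hΩ.2.1.nonempty
    fun x _ => (hsmall x).trans_le hvol
  obtain ⟨z, hz⟩ := hΩ.exists_ball_subset hM₀ (subset_closure hx₁) (subset_closure hx₂)
  exact ⟨z, (ball_subset_ball (by gcongr)).trans hz⟩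
end

section
/- Let D_i ⊆ B_{R₀} ⊆ ℝⁿ be measurable sets, each satisfying the uniform lower density bound |B_r(x) ∩ D_i| > c rⁿ for all x ∈ ∂D_i and 0 < r < diam(D_i), and suppose χ_{D_i} → χ_D in L¹, where D is normalized so that 0 < |D ∩ B_r(x)| < ω_n rⁿ for all x ∈ ∂D and r > 0. Then for every ε > 0 there exists N such that for all i > N: D ⊆ D_i^ε, where D_i^ε = {x : dist(x, D_i) < ε}. -/
/-!
Points of `Dlim` carry positive local measure: on the frontier by the normalization, in the
interior trivially. Since `Dlim \ D i` has vanishing measure while all `D i` lie in `ball 0 R₀`,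
every such point lies in `closedBall 0 R₀`, so `Dlim` is totally bounded. Cover it by finitely
many `ε / 2`-balls centred in `Dlim`; once `|Dlim \ D i|` is below the measure of `Dlim` in each
of them, `D i` meets every one of these balls, and each point of `Dlim` is `ε`-close to `D i`.
-/

open MeasureTheory Metric Set Filter Topology

section Measure

variable {X : Type*} [MeasurableSpace X] {μ : Measure X}

theorem measure_diff_eq_zero_of_tendsto {ι : Type*} {l : Filter ι} [l.NeBot]
    {t : ι → Set X} {s K : Set X} (htK : ∀ i, t i ⊆ K)
    (ht : Tendsto (fun i => μ (s \ t i)) l (𝓝 0)) : μ (s \ K) = 0 :=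
  nonpos_iff_eq_zero.1 <| ge_of_tendsto' ht fun i =>
    measure_mono (sdiff_subset_sdiff_right (htK i))

theorem tendsto_measure_diff_of_tendsto_symmDiff {ι : Type*} {l : Filter ι}
    {t : ι → Set X} {s : Set X} (ht : Tendsto (fun i => μ (symmDiff (t i) s)) l (𝓝 0)) :
    Tendsto (fun i => μ (s \ t i)) l (𝓝 0) :=
  tendsto_of_tendsto_of_tendsto_of_le_of_le tendsto_const_nhds ht (fun _ => zero_le)
    fun i => measure_mono (symmDiff_def (t i) s ▸ subset_union_right)

theorem nonempty_inter_of_measure_diff_lt {s t u : Set X} (h : μ (s \ t) < μ (s ∩ u)) :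
    (t ∩ u).Nonempty := by
  by_contra hempty
  exact h.not_ge (measure_mono fun y hy => ⟨hy.1, fun hyt => hempty ⟨y, hyt, hy.2⟩⟩)

end Measure

section LocalMeasure

variable {X : Type*} [PseudoMetricSpace X] [MeasurableSpace X] (μ : Measure X)

theorem measure_inter_ball_pos_of_mem [μ.IsOpenPosMeasure] {s : Set X}
    (hfrontier : ∀ x ∈ frontier s, ∀ r : ℝ, 0 < r → 0 < μ (s ∩ ball x r)) :
    ∀ x ∈ s, ∀ r : ℝ, 0 < r → 0 < μ (s ∩ ball x r) := by
  intro x hx r hr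
  by_cases hxf : x ∈ frontier s
  · exact hfrontier x hxf r hr
  have hxi : x ∈ interior s := self_sdiff_frontier s ▸ ⟨hx, hxf⟩
  calc 0 < μ (interior s ∩ ball x r) :=
        (isOpen_interior.inter isOpen_ball).measure_pos μ ⟨x, hxi, mem_ball_self hr⟩
    _ ≤ μ (s ∩ ball x r) := measure_mono (inter_subset_inter_left _ interior_subset)

variable {μ}

theorem subset_of_measure_diff_eq_zero {s K : Set X} (hK : IsClosed K)
    (hpos : ∀ x ∈ s, ∀ r : ℝ, 0 < r → 0 < μ (s ∩ ball x r)) (hnull : μ (s \ K) = 0) :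
    s ⊆ K := by
  intro x hx
  by_contra hxK
  obtain ⟨r, hr, hball⟩ := isOpen_iff.1 hK.isOpen_compl x hxK
  have hsub : s ∩ ball x r ⊆ s \ K := fun y hy => ⟨hy.1, hball hy.2⟩
  exact (hpos x hx r hr).ne' (measure_mono_null hsub hnull)

theorem eventually_subset_infDist_lt {ι : Type*} {l : Filter ι} {s : Set X}
    (hs : TotallyBounded s) (hpos : ∀ x ∈ s, ∀ r : ℝ, 0 < r → 0 < μ (s ∩ ball x r))
    {t : ι → Set X} (ht : Tendsto (fun i => μ (s \ t i)) l (𝓝 0)) {ε : ℝ} (hε : 0 < ε) :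
    ∀ᶠ i in l, s ⊆ {x | infDist x (t i) < ε} := by
  obtain ⟨c, hcs, hcfin, hcover⟩ := finite_approx_of_totallyBounded hs (ε / 2) (half_pos hε)
  have hmeet : ∀ᶠ i in l, ∀ y ∈ c, (t i ∩ ball y (ε / 2)).Nonempty :=
    hcfin.eventually_all.2 fun y hy =>
      (ht.eventually_lt_const (hpos y (hcs hy) _ (half_pos hε))).mono
        fun _ => nonempty_inter_of_measure_diff_lt
  filter_upwards [hmeet] with i hi x hx
  obtain ⟨y, hy, hxy⟩ := mem_iUnion₂.1 (hcover hx)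
  obtain ⟨z, hz, hzy⟩ := hi y hy
  calc infDist x (t i) ≤ dist x z := infDist_le_dist_of_mem hz
    _ ≤ dist x y + dist z y := dist_triangle_right x z y
    _ < ε / 2 + ε / 2 := add_lt_add hxy hzy
    _ = ε := add_halves ε

end LocalMeasure

theorem limit_in_neighborhood_of_sets_general {n : ℕ} (R₀ : ℝ)
    (D : ℕ → Set (EuclideanSpace ℝ (Fin n))) (Dlim : Set (EuclideanSpace ℝ (Fin n)))
    (hsub : ∀ i, D i ⊆ Metric.ball 0 R₀)
    (hconv : Tendsto (fun i => volume (symmDiff (D i) Dlim)) atTop (nhds 0))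
    (hnorm : ∀ x ∈ frontier Dlim, ∀ r : ℝ, 0 < r →
      0 < volume (Dlim ∩ Metric.ball x r) ∧
      volume (Dlim ∩ Metric.ball x r) <
        ENNReal.ofReal
          ((volume (Metric.ball (0 : EuclideanSpace ℝ (Fin n)) 1)).toReal * r ^ n)) :
    ∀ ε : ℝ, 0 < ε → ∃ N : ℕ, ∀ i > N,
      Dlim ⊆ {x | Metric.infDist x (D i) < ε} := by
  intro ε hε
  have hpos := measure_inter_ball_pos_of_mem volume fun x hx r hr => (hnorm x hx r hr).1
  have hdiff := tendsto_measure_diff_of_tendsto_symmDiff hconv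
  have hbdd : Dlim ⊆ closedBall 0 R₀ :=
    subset_of_measure_diff_eq_zero isClosed_closedBall hpos <|
      measure_diff_eq_zero_of_tendsto (fun i => (hsub i).trans ball_subset_closedBall) hdiff
  obtain ⟨N, hN⟩ := eventually_atTop.1 <| eventually_subset_infDist_lt
    ((isCompact_closedBall 0 R₀).totallyBounded.subset hbdd) hpos hdiff hε
  exact ⟨N, fun i hi => hN i hi.le⟩

theorem limit_in_neighborhood_of_sets {n : ℕ} (R₀ c : ℝ) (hc : 0 < c)
    (D : ℕ → Set (EuclideanSpace ℝ (Fin n))) (Dlim : Set (EuclideanSpace ℝ (Fin n)))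
    (hsub : ∀ i, D i ⊆ Metric.ball 0 R₀)
    (hmeas : ∀ i, MeasurableSet (D i)) (hmeasD : MeasurableSet Dlim)
    (hdens : ∀ i, ∀ x ∈ frontier (D i), ∀ r : ℝ, 0 < r → r < Metric.diam (D i) →
      ENNReal.ofReal (c * r ^ n) < volume (Metric.ball x r ∩ D i))
    (hconv : Tendsto (fun i => volume (symmDiff (D i) Dlim)) atTop (nhds 0))
    (hnorm : ∀ x ∈ frontier Dlim, ∀ r : ℝ, 0 < r →
      0 < volume (Dlim ∩ Metric.ball x r) ∧
      volume (Dlim ∩ Metric.ball x r) <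
        ENNReal.ofReal
          ((volume (Metric.ball (0 : EuclideanSpace ℝ (Fin n)) 1)).toReal * r ^ n)) :
    ∀ ε : ℝ, 0 < ε → ∃ N : ℕ, ∀ i > N,
      Dlim ⊆ {x | Metric.infDist x (D i) < ε} :=
  limit_in_neighborhood_of_sets_general R₀ D Dlim hsub hconv hnorm
end

section
/- Let D_i ⊆ B_{R₀} ⊆ ℝⁿ be measurable sets satisfying the uniform lower density bound (|B_r(x) ∩ D_i| > c rⁿ for x ∈ ∂D_i, 0 < r < diam(D_i)), and suppose |D_i Δ D| → 0 where D satisfies 0 < |D ∩ B_r(x)| < ω_n rⁿ for all x ∈ ∂D, r > 0. Then for every ε > 0 there exists N such that for all i > N one has (D_i)_ε ⊆ D, where (D_i)_ε = {x : B_ε(x) ⊆ D_i}. -/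
/-!
A point `x` of `(D i)_ε` lying outside `D` is a point of the compact set
`closedBall 0 R₀ \ interior D`. At every point `y` of that set the ball `B_{ε/2}(y)` meets the
complement of `D` in positive measure: outside `closure D` because the complement of
`closure D` is open, on `∂D` because `|D ∩ B_{ε/2}(y)| < ω_n (ε/2)ⁿ = |B_{ε/2}(y)|`.
By compactness these measures are bounded below by some `m > 0` uniformly on the larger balls
`B_ε(x)`, and `B_ε(x) \ D ⊆ D_i Δ D`, so `|D_i Δ D| ≥ m`, which fails for large `i`.
-/

open MeasureTheory Metric Set Filter

section BallDiff

variable {X : Type*} [PseudoMetricSpace X] [MeasurableSpace X] (μ : Measure X)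

theorem measure_ball_diff_pos [μ.IsOpenPosMeasure] {A : Set X} {x : X} {r : ℝ} (hr : 0 < r)
    (hx : x ∉ interior A) (hfrontier : x ∈ frontier A → μ (A ∩ ball x r) < μ (ball x r)) :
    0 < μ (ball x r \ A) := by
  by_cases hxA : x ∈ closure A
  · refine pos_iff_ne_zero.2 fun hzero => (hfrontier ⟨hxA, hx⟩).not_ge ?_
    calc μ (ball x r) ≤ μ (ball x r ∩ A) + μ (ball x r \ A) :=
          measure_le_inter_add_sdiff _ _ _
      _ = μ (A ∩ ball x r) := by rw [hzero, add_zero, inter_comm]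
  · have hopen : IsOpen (ball x r ∩ (closure A)ᶜ) :=
      isOpen_ball.inter isClosed_closure.isOpen_compl
    exact (hopen.measure_pos μ ⟨x, mem_ball_self hr, hxA⟩).trans_le
      (measure_mono (sdiff_subset_sdiff_right subset_closure))

theorem IsCompact.exists_pos_le_measure_ball_diff {K A : Set X} (hK : IsCompact K) {r : ℝ}
    (hr : 0 < r) (hpos : ∀ x ∈ K, 0 < μ (ball x r \ A)) :
    ∃ m > 0, ∀ x ∈ K, m ≤ μ (ball x (2 * r) \ A) := by
  obtain ⟨t, htK, hcover⟩ :=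
    hK.elim_nhds_subcover (fun x => ball x r) fun x _ => ball_mem_nhds x hr
  refine ⟨t.inf fun y => μ (ball y r \ A),
    (Finset.lt_inf_iff ENNReal.zero_lt_top).2 fun y hy => hpos y (htK y hy), fun x hx => ?_⟩
  obtain ⟨y, hyt, hxy⟩ := mem_iUnion₂.1 (hcover hx)
  have hball : ball y r ⊆ ball x (2 * r) := ball_subset_ball' (by linarith [mem_ball'.1 hxy])
  exact (Finset.inf_le hyt).trans (measure_mono (sdiff_subset_sdiff_left hball))

end BallDiff

theorem EuclideanSpace.volume_ball_eq_ofReal {n : ℕ} (x : EuclideanSpace ℝ (Fin n)) {r : ℝ}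
    (hr : 0 < r) :
    volume (ball x r) =
      ENNReal.ofReal ((volume (ball (0 : EuclideanSpace ℝ (Fin n)) 1)).toReal * r ^ n) := by
  rw [Measure.addHaar_ball_of_pos volume x hr, ENNReal.ofReal_mul ENNReal.toReal_nonneg,
    ENNReal.ofReal_toReal measure_ball_lt_top.ne, finrank_euclideanSpace_fin, mul_comm]

theorem inner_core_subset_limit_general {n : ℕ} (R₀ : ℝ)
    (D : ℕ → Set (EuclideanSpace ℝ (Fin n))) (Dlim : Set (EuclideanSpace ℝ (Fin n)))
    (hsub : ∀ i, D i ⊆ Metric.ball 0 R₀)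
    (hconv : Tendsto (fun i => volume (symmDiff (D i) Dlim)) atTop (nhds 0))
    (hnorm : ∀ x ∈ frontier Dlim, ∀ r : ℝ, 0 < r →
      0 < volume (Dlim ∩ Metric.ball x r) ∧
      volume (Dlim ∩ Metric.ball x r) <
        ENNReal.ofReal
          ((volume (Metric.ball (0 : EuclideanSpace ℝ (Fin n)) 1)).toReal * r ^ n)) :
    ∀ ε : ℝ, 0 < ε → ∃ N : ℕ, ∀ i > N,
      {x | Metric.ball x ε ⊆ D i} ⊆ Dlim := by
  intro ε hε
  have hε2 : 0 < ε / 2 := half_pos hε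
  have hK : IsCompact (closedBall 0 R₀ \ interior Dlim) :=
    (isCompact_closedBall _ _).diff isOpen_interior
  obtain ⟨m, hm, hmle⟩ := hK.exists_pos_le_measure_ball_diff volume hε2 fun x hx =>
    measure_ball_diff_pos volume hε2 hx.2 fun hxf =>
      EuclideanSpace.volume_ball_eq_ofReal x hε2 ▸ (hnorm x hxf _ hε2).2
  obtain ⟨N, hN⟩ := eventually_atTop.1 (hconv.eventually (gt_mem_nhds hm))
  refine ⟨N, fun i hi x hx => by_contra fun hxD => (hN i hi.le).not_ge ?_⟩
  have hxK : x ∈ closedBall 0 R₀ \ interior Dlim :=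
    ⟨ball_subset_closedBall (hsub i (hx (mem_ball_self hε))), fun h => hxD (interior_subset h)⟩
  calc m ≤ volume (ball x (2 * (ε / 2)) \ Dlim) := hmle x hxK
    _ ≤ volume (symmDiff (D i) Dlim) := by
      rw [mul_div_cancel₀ ε two_ne_zero]
      exact measure_mono ((sdiff_subset_sdiff_left hx).trans le_sup_left)

theorem inner_core_subset_limit {n : ℕ} (R₀ c : ℝ) (hc : 0 < c)
    (D : ℕ → Set (EuclideanSpace ℝ (Fin n))) (Dlim : Set (EuclideanSpace ℝ (Fin n)))
    (hsub : ∀ i, D i ⊆ Metric.ball 0 R₀)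
    (hmeas : ∀ i, MeasurableSet (D i)) (hmeasD : MeasurableSet Dlim)
    (hdens : ∀ i, ∀ x ∈ frontier (D i), ∀ r : ℝ, 0 < r → r < Metric.diam (D i) →
      ENNReal.ofReal (c * r ^ n) < volume (Metric.ball x r ∩ D i))
    (hconv : Tendsto (fun i => volume (symmDiff (D i) Dlim)) atTop (nhds 0))
    (hnorm : ∀ x ∈ frontier Dlim, ∀ r : ℝ, 0 < r →
      0 < volume (Dlim ∩ Metric.ball x r) ∧
      volume (Dlim ∩ Metric.ball x r) <
        ENNReal.ofReal
          ((volume (Metric.ball (0 : EuclideanSpace ℝ (Fin n)) 1)).toReal * r ^ n)) :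
    ∀ ε : ℝ, 0 < ε → ∃ N : ℕ, ∀ i > N,
      {x | Metric.ball x ε ⊆ D i} ⊆ Dlim :=
  inner_core_subset_limit_general R₀ D Dlim hsub hconv hnorm
end

section
/- Let D_i ⊆ B_{R₀} ⊆ ℝⁿ satisfy the uniform lower density bound |B_r(x) ∩ D_i| > c rⁿ for all x ∈ ∂D_i and 0 < r < diam(D_i), and suppose |D_i Δ D| → 0 with D normalized so that 0 < |D ∩ B_r(x)| < ω_n rⁿ for all x ∈ ∂D, r > 0. Then for every ε > 0 there exists N such that D_i ⊆ D^ε for all i > N, where D^ε = {x : dist(x, D) < ε}. Consequently the Hausdorff distance d_H(D_i, D) tends to 0. -/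
/-!
Near a point `x` of `D i` whose distance from `D` is at least `ε`, the set `D i` carries a
definite amount of mass outside `D`: either `D i` is tiny and then misses all of `D`, or the
ball of radius `ε / 2` about `x` lies in `D i`, or it contains a boundary point of `D i`, where
the lower density bound applies. As `|D i Δ D| → 0` this rules such points out eventually.
Conversely, `D` has positive mass near every point of its closure, which is compact because
`D` lies in `B_{R₀}` up to a null set; a finite cover by small balls turns this into a uniform
lower bound, so eventually every small ball about a point of `D` meets `D i`.
-/

open MeasureTheory Metric Set Filter ENNReal Topology

theorem IsPreconnected.inter_frontier_nonempty {X : Type*} [TopologicalSpace X] {t s : Set X}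
    (ht : IsPreconnected t) (hts : (t ∩ s).Nonempty) (hts' : (t \ s).Nonempty) :
    (t ∩ frontier s).Nonempty := by
  have := isPreconnected_iff_preconnectedSpace.1 ht
  obtain ⟨x, hxt, hxs⟩ := hts
  obtain ⟨x', hxt', hxs'⟩ := hts'
  obtain ⟨⟨y, hyt⟩, hy⟩ := (nonempty_frontier_iff (s := ((↑) : t → X) ⁻¹' s)).2
    ⟨⟨⟨x, hxt⟩, hxs⟩, ne_univ_iff_exists_notMem _ |>.2 ⟨⟨x', hxt'⟩, hxs'⟩⟩
  exact ⟨y, hyt, continuous_subtype_val.frontier_preimage_subset s hy⟩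

theorem measure_diff_eq_zero_of_tendsto_measure_symmDiff {X ι : Type*} [MeasurableSpace X]
    {μ : Measure X} {l : Filter ι} [l.NeBot] {D : ι → Set X} {L B : Set X} (hDB : ∀ i, D i ⊆ B)
    (hconv : Tendsto (fun i => μ (symmDiff (D i) L)) l (𝓝 0)) : μ (L \ B) = 0 :=
  nonpos_iff_eq_zero.1 <| ge_of_tendsto' hconv fun i =>
    measure_mono fun _ hy => Or.inr ⟨hy.1, fun hyD => hy.2 (hDB i hyD)⟩

section PseudoMetric

variable {X : Type*} [PseudoMetricSpace X] [MeasurableSpace X] {μ : Measure X}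

theorem measure_inter_ball_pos_of_mem_closure [μ.IsOpenPosMeasure] {L : Set X}
    (hfr : ∀ x ∈ frontier L, ∀ r, 0 < r → 0 < μ (L ∩ ball x r)) {x : X} (hx : x ∈ closure L)
    {r : ℝ} (hr : 0 < r) : 0 < μ (L ∩ ball x r) := by
  by_cases hxi : x ∈ interior L
  · exact ((isOpen_interior.inter isOpen_ball).measure_pos μ ⟨x, hxi, mem_ball_self hr⟩).trans_le
      (measure_mono (inter_subset_inter_left _ interior_subset))
  · exact hfr x ⟨hx, hxi⟩ r hr

theorem closure_subset_closure_of_measure_diff_eq_zero {L B : Set X}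
    (hpos : ∀ x ∈ closure L, ∀ r, 0 < r → 0 < μ (L ∩ ball x r)) (hnull : μ (L \ B) = 0) :
    closure L ⊆ closure B := by
  intro x hx
  rw [Metric.mem_closure_iff]
  intro r hr
  by_contra! hfar
  have hsub : L ∩ ball x r ⊆ L \ B :=
    fun y ⟨hyL, hyx⟩ => ⟨hyL, fun hyB => (hfar y hyB).not_gt (mem_ball'.1 hyx)⟩
  exact (hpos x hx r hr).ne' (measure_mono_null hsub hnull)

theorem IsCompact.exists_pos_le_measure_inter_ball {K L : Set X} (hK : IsCompact K)
    (hpos : ∀ x ∈ K, ∀ r, 0 < r → 0 < μ (L ∩ ball x r)) {r : ℝ} (hr : 0 < r) :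
    ∃ δ > 0, ∀ x ∈ K, δ ≤ μ (L ∩ ball x r) := by
  obtain ⟨t, htK, hcover⟩ :=
    hK.elim_nhds_subcover (fun y => ball y (r / 2)) fun y _ => ball_mem_nhds y (half_pos hr)
  refine ⟨t.inf fun y => μ (L ∩ ball y (r / 2)), ?_, fun x hx => ?_⟩
  · exact (Finset.lt_inf_iff ENNReal.zero_lt_top).2 fun y hy => hpos y (htK y hy) _ (half_pos hr)
  · obtain ⟨y, hyt, hxy⟩ := mem_iUnion₂.1 (hcover hx)
    have hball : ball y (r / 2) ⊆ ball x r :=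
      ball_subset_ball' (by linarith [dist_comm x y ▸ mem_ball.1 hxy])
    exact (Finset.inf_le hyt).trans (measure_mono (inter_subset_inter_right _ hball))

theorem eventually_infDist_lt_of_measure_inter_ball_pos {ι : Type*} {l : Filter ι}
    {D : ι → Set X} {L : Set X} (hK : IsCompact (closure L))
    (hpos : ∀ x ∈ closure L, ∀ r, 0 < r → 0 < μ (L ∩ ball x r))
    (hconv : Tendsto (fun i => μ (symmDiff (D i) L)) l (𝓝 0)) {ε : ℝ} (hε : 0 < ε) :
    ∀ᶠ i in l, ∀ x ∈ L, infDist x (D i) < ε := by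
  obtain ⟨δ, hδ, hle⟩ := hK.exists_pos_le_measure_inter_ball hpos hε
  filter_upwards [hconv.eventually_lt_const hδ] with i hi x hx
  have hmeets : ¬ L ∩ ball x ε ⊆ L \ D i := fun hsub =>
    (hle x (subset_closure hx)).not_gt ((measure_mono (hsub.trans subset_union_right)).trans_lt hi)
  obtain ⟨w, ⟨hwL, hwx⟩, hwD⟩ := not_subset.1 hmeets
  exact (infDist_le_dist_of_mem (not_not.1 fun h => hwD ⟨hwL, h⟩)).trans_lt (mem_ball'.1 hwx)

end PseudoMetric

theorem tendsto_hausdorffDist_zero_of_eventually_infDist_lt {X ι : Type*} [PseudoMetricSpace X]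
    {l : Filter ι} {s : ι → Set X} {t : Set X}
    (hst : ∀ ε > 0, ∀ᶠ i in l, ∀ x ∈ s i, infDist x t < ε)
    (hts : ∀ ε > 0, ∀ᶠ i in l, ∀ x ∈ t, infDist x (s i) < ε) :
    Tendsto (fun i => hausdorffDist (s i) t) l (𝓝 0) := by
  rw [Metric.tendsto_nhds]
  intro ε hε
  filter_upwards [hst (ε / 2) (half_pos hε), hts (ε / 2) (half_pos hε)] with i hi₁ hi₂
  rw [Real.dist_0_eq_abs, abs_of_nonneg hausdorffDist_nonneg]
  exact (hausdorffDist_le_of_infDist (half_pos hε).le (fun x hx => (hi₁ x hx).le)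
    fun x hx => (hi₂ x hx).le).trans_lt (half_lt_self hε)

section Normed

variable {E : Type*} [NormedAddCommGroup E] [NormedSpace ℝ E] [MeasurableSpace E] {μ : Measure E}

theorem min_measure_ball_le_measure_ball_inter {s : Set E} {x : E} {r : ℝ} {m : ℝ≥0∞}
    (hr : 0 < r) (hx : x ∈ s) (hfr : ∀ y ∈ frontier s, m < μ (ball y r ∩ s)) :
    min (μ (ball x r)) m ≤ μ (ball x (2 * r) ∩ s) := by
  by_cases hball : ball x r ⊆ s
  · exact (min_le_left _ _).trans
      (measure_mono (subset_inter (ball_subset_ball (by linarith)) hball))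
  · obtain ⟨y, hyx, hy⟩ := (convex_ball x r).isPreconnected.inter_frontier_nonempty
      ⟨x, mem_ball_self hr, hx⟩ (not_subset.1 hball)
    have hsub : ball y r ⊆ ball x (2 * r) := ball_subset_ball' (by linarith [mem_ball.1 hyx])
    exact (min_le_right _ _).trans
      ((hfr y hy).le.trans (measure_mono (inter_subset_inter_left _ hsub)))

variable [BorelSpace E] [μ.IsAddHaarMeasure]

theorem min_le_measure_symmDiff_of_le_infDist {s L : Set E} {x : E} {ε : ℝ} {m : ℝ≥0∞}
    (hs : Bornology.IsBounded s) (hx : x ∈ s) (hε : 0 < ε) (hxL : ε ≤ infDist x L)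
    (hfr : ε / 2 < diam s → ∀ y ∈ frontier s, m < μ (ball y (ε / 2) ∩ s)) :
    min (μ L) (min (μ (ball 0 (ε / 2))) m) ≤ μ (symmDiff s L) := by
  have hfar : ∀ y ∈ L, y ∉ ball x ε := fun y hy hyx =>
    (hxL.trans (infDist_le_dist_of_mem hy)).not_gt (mem_ball'.1 hyx)
  by_cases hdiam : diam s ≤ ε / 2
  · have hs_ball : s ⊆ ball x ε := fun w hw =>
      mem_ball.2 ((dist_le_diam_of_mem hs hw hx).trans_lt (by linarith))
    exact (min_le_left _ _).trans
      (measure_mono fun y hy => Or.inr ⟨hy, fun hys => hfar y hy (hs_ball hys)⟩)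
  · have hlocal := min_measure_ball_le_measure_ball_inter (μ := μ) (half_pos hε) hx
      (hfr (not_le.1 hdiam))
    rw [Measure.addHaar_ball_center, mul_div_cancel₀ _ two_ne_zero] at hlocal
    exact (min_le_right _ _).trans (hlocal.trans
      (measure_mono fun y ⟨hyx, hys⟩ => Or.inl ⟨hys, fun hyL => hfar y hyL hyx⟩))

theorem eventually_infDist_lt_of_frontier_density {ι : Type*} {l : Filter ι}
    {D : ι → Set E} {L : Set E} {m : ℝ → ℝ≥0∞} (hm : ∀ r, 0 < r → 0 < m r) (hL : 0 < μ L)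
    (hD : ∀ i, Bornology.IsBounded (D i))
    (hdens : ∀ i, ∀ x ∈ frontier (D i), ∀ r, 0 < r → r < diam (D i) → m r < μ (ball x r ∩ D i))
    (hconv : Tendsto (fun i => μ (symmDiff (D i) L)) l (𝓝 0)) {ε : ℝ} (hε : 0 < ε) :
    ∀ᶠ i in l, ∀ x ∈ D i, infDist x L < ε := by
  have hδ : 0 < min (μ L) (min (μ (ball 0 (ε / 2))) (m (ε / 2))) :=
    lt_min hL (lt_min (measure_ball_pos μ 0 (half_pos hε)) (hm _ (half_pos hε)))
  filter_upwards [hconv.eventually_lt_const hδ] with i hi x hx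
  by_contra! hxL
  exact (min_le_measure_symmDiff_of_le_infDist (hD i) hx hε hxL
    fun hdiam y hy => hdens i y hy _ (half_pos hε) hdiam).not_gt hi

end Normed

theorem sets_subset_limit_neighborhood_and_hausdorff_general {n : ℕ} (R₀ c : ℝ) (hc : 0 < c)
    (D : ℕ → Set (EuclideanSpace ℝ (Fin n))) (Dlim : Set (EuclideanSpace ℝ (Fin n)))
    (hsub : ∀ i, D i ⊆ Metric.ball 0 R₀)
    (hdens : ∀ i, ∀ x ∈ frontier (D i), ∀ r : ℝ, 0 < r → r < Metric.diam (D i) →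
      ENNReal.ofReal (c * r ^ n) < volume (Metric.ball x r ∩ D i))
    (hconv : Tendsto (fun i => volume (symmDiff (D i) Dlim)) atTop (nhds 0))
    (hnorm : ∀ x ∈ frontier Dlim, ∀ r : ℝ, 0 < r →
      0 < volume (Dlim ∩ Metric.ball x r) ∧
      volume (Dlim ∩ Metric.ball x r) <
        ENNReal.ofReal
          ((volume (Metric.ball (0 : EuclideanSpace ℝ (Fin n)) 1)).toReal * r ^ n)) :
    (∀ ε : ℝ, 0 < ε → ∃ N : ℕ, ∀ i > N,
      D i ⊆ {x | Metric.infDist x Dlim < ε}) ∧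
    Tendsto (fun i => Metric.hausdorffDist (D i) Dlim) atTop (nhds 0) := by
  rcases Dlim.eq_empty_or_nonempty with rfl | ⟨y, hy⟩
  · exact ⟨fun ε hε => ⟨0, fun i _ x _ => by simpa using hε⟩,
      by simpa only [hausdorffDist_empty] using tendsto_const_nhds⟩
  have hpos : ∀ x ∈ closure Dlim, ∀ r, 0 < r → 0 < volume (Dlim ∩ ball x r) :=
    fun x hx r hr => measure_inter_ball_pos_of_mem_closure
      (fun z hz s hs => (hnorm z hz s hs).1) hx hr
  have hK : IsCompact (closure Dlim) :=
    (isCompact_closedBall 0 R₀).of_isClosed_subset isClosed_closure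
      ((closure_subset_closure_of_measure_diff_eq_zero hpos
        (measure_diff_eq_zero_of_tendsto_measure_symmDiff hsub hconv)).trans
        closure_ball_subset_closedBall)
  have hA : ∀ ε > 0, ∀ᶠ i in atTop, ∀ x ∈ D i, infDist x Dlim < ε := fun ε hε =>
    eventually_infDist_lt_of_frontier_density (m := fun r => ENNReal.ofReal (c * r ^ n))
      (fun r hr => ENNReal.ofReal_pos.2 (by positivity))
      ((hpos y (subset_closure hy) 1 one_pos).trans_le (measure_mono inter_subset_left))
      (fun i => isBounded_ball.subset (hsub i)) hdens hconv hε
  have hB : ∀ ε > 0, ∀ᶠ i in atTop, ∀ x ∈ Dlim, infDist x (D i) < ε := fun ε hε =>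
    eventually_infDist_lt_of_measure_inter_ball_pos hK hpos hconv hε
  refine ⟨fun ε hε => ?_, tendsto_hausdorffDist_zero_of_eventually_infDist_lt hA hB⟩
  obtain ⟨N, hN⟩ := eventually_atTop.1 (hA ε hε)
  exact ⟨N, fun i hi => hN i hi.le⟩

theorem sets_subset_limit_neighborhood_and_hausdorff {n : ℕ} (R₀ c : ℝ) (hc : 0 < c)
    (D : ℕ → Set (EuclideanSpace ℝ (Fin n))) (Dlim : Set (EuclideanSpace ℝ (Fin n)))
    (hsub : ∀ i, D i ⊆ Metric.ball 0 R₀)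
    (hmeas : ∀ i, MeasurableSet (D i)) (hmeasD : MeasurableSet Dlim)
    (hdens : ∀ i, ∀ x ∈ frontier (D i), ∀ r : ℝ, 0 < r → r < Metric.diam (D i) →
      ENNReal.ofReal (c * r ^ n) < volume (Metric.ball x r ∩ D i))
    (hconv : Tendsto (fun i => volume (symmDiff (D i) Dlim)) atTop (nhds 0))
    (hnorm : ∀ x ∈ frontier Dlim, ∀ r : ℝ, 0 < r →
      0 < volume (Dlim ∩ Metric.ball x r) ∧
      volume (Dlim ∩ Metric.ball x r) <
        ENNReal.ofReal
          ((volume (Metric.ball (0 : EuclideanSpace ℝ (Fin n)) 1)).toReal * r ^ n)) :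
    (∀ ε : ℝ, 0 < ε → ∃ N : ℕ, ∀ i > N,
      D i ⊆ {x | Metric.infDist x Dlim < ε}) ∧
    Tendsto (fun i => Metric.hausdorffDist (D i) Dlim) atTop (nhds 0) :=
  sets_subset_limit_neighborhood_and_hausdorff_general R₀ c hc D Dlim hsub hdens hconv hnorm
end

section
/- Let Ω ⊆ B_R ⊆ ℝⁿ be an M-uniform domain with diam(Ω) ≥ c₀ > 0. Then there exist δ = δ(M, n) ∈ (0, 1] and C = C(c₀, M, R, n) > 0 such that |(∂Ω)^r| ≤ C r^δ for all r ∈ (0, 1], where (∂Ω)^r = {x : dist(x, ∂Ω) < r}. -/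
/-!
The boundary of an `M`-uniform domain is uniformly porous: the uniform curve from a boundary
point `x` to a point of `Ω` at distance `≥ s / 3` passes, at distance `s / 6` from `x`, through
a point whose distance to `∂Ω` is at least `s / (6M)`.

For a bounded set `F` that is porous with ratio `c`, take a maximal `3s`-separated net of the
`cs/2`-neighbourhood of `F` and put a hole of radius `cs/2` next to each net point. The holes are
disjoint, lie in the `s`-neighbourhood of `F` but outside its `cs/2`-neighbourhood, and fill the
fraction `κ = (c/6)^d` of the volume of the net balls, so `|F^{cs/2}| ≤ (1 + κ)⁻¹ |F^s|`.
Iterating this decay gives `|F^r| ≲ r^δ` with `(c/2)^δ = (1 + κ)⁻¹`.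
-/

open MeasureTheory Metric Set

open scoped ENNReal NNReal
open Module

theorem TotallyBounded.packingNumber_ne_top {X : Type*} [PseudoEMetricSpace X] {A : Set X}
    (hA : TotallyBounded A) {ε : ℝ≥0} (hε : ε ≠ 0) : packingNumber ε A ≠ ⊤ := by
  obtain ⟨N, -, hN, hcover⟩ :=
    exists_finite_isCover_of_totallyBounded (half_pos hε.bot_lt).ne' hA
  have h := (packingNumber_two_mul_le_externalCoveringNumber (ε / 2) A).trans
    hcover.externalCoveringNumber_le_encard
  rw [mul_div_cancel₀ _ two_ne_zero] at h
  exact (h.trans_lt hN.encard_lt_top).ne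

theorem TotallyBounded.exists_finset_separated_cover {X : Type*} [PseudoMetricSpace X]
    {A : Set X} (hA : TotallyBounded A) {ρ : ℝ} (hρ : 0 < ρ) :
    ∃ T : Finset X, ↑T ⊆ A ∧ (T : Set X).Pairwise (fun a b ↦ ρ < dist a b) ∧
      A ⊆ ⋃ z ∈ T, closedBall z ρ := by
  have hfin := hA.packingNumber_ne_top (ε := ρ.toNNReal) (by simpa using hρ)
  have hT : (maximalSeparatedSet ρ.toNNReal A).Finite := by
    rw [← encard_ne_top_iff, encard_maximalSeparatedSet hfin]; exact hfin
  refine ⟨hT.toFinset, by simpa using maximalSeparatedSet_subset, ?_, ?_⟩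
  · intro a ha b hb hab
    have := isSeparated_maximalSeparatedSet (ε := ρ.toNNReal) (A := A) (by simpa using ha)
      (by simpa using hb) hab
    simp only [edist_dist] at this
    exact (ENNReal.ofReal_lt_ofReal_iff_of_nonneg hρ.le).1 this
  · have := (isCover_maximalSeparatedSet hfin).subset_iUnion_closedBall
    simpa [Real.coe_toNNReal _ hρ.le] using this

theorem Monotone.le_rpow_mul_of_geometric_decay {f : ℝ → ℝ≥0∞} (hf : Monotone f)
    {q δ s₀ : ℝ} (hq₀ : 0 < q) (hq₁ : q < 1) (hδ : 0 ≤ δ) (hs₀ : 0 < s₀)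
    (hstep : ∀ s ∈ Ioc 0 s₀, f (q * s) ≤ ENNReal.ofReal (q ^ δ) * f s)
    {r : ℝ} (hr : r ∈ Ioc 0 s₀) :
    f r ≤ ENNReal.ofReal ((r / (q * s₀)) ^ δ) * f s₀ := by
  have hiter : ∀ k : ℕ, f (q ^ k * s₀) ≤ ENNReal.ofReal ((q ^ k) ^ δ) * f s₀ := by
    intro k
    induction k with
    | zero => simp
    | succ k ih =>
      have hk : q ^ k * s₀ ∈ Ioc 0 s₀ :=
        ⟨by positivity, mul_le_of_le_one_left hs₀.le (pow_le_one₀ hq₀.le hq₁.le)⟩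
      calc f (q ^ (k + 1) * s₀) = f (q * (q ^ k * s₀)) := by ring_nf
        _ ≤ ENNReal.ofReal (q ^ δ) * (ENNReal.ofReal ((q ^ k) ^ δ) * f s₀) :=
          (hstep _ hk).trans (by gcongr)
        _ = ENNReal.ofReal ((q ^ (k + 1)) ^ δ) * f s₀ := by
          rw [← mul_assoc, ← ENNReal.ofReal_mul (by positivity),
            ← Real.mul_rpow hq₀.le (by positivity), pow_succ']
  obtain ⟨k, hk_lt, hk_le⟩ := exists_nat_pow_near_of_lt_one (div_pos hr.1 hs₀)
    ((div_le_one hs₀).2 hr.2) hq₀ hq₁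
  have hqk : q ^ k ≤ r / (q * s₀) := by
    rw [le_div_iff₀ (by positivity)]
    rw [lt_div_iff₀ hs₀, pow_succ] at hk_lt
    linarith
  calc f r ≤ f (q ^ k * s₀) := hf ((div_le_iff₀ hs₀).1 hk_le)
    _ ≤ ENNReal.ofReal ((q ^ k) ^ δ) * f s₀ := hiter k
    _ ≤ ENNReal.ofReal ((r / (q * s₀)) ^ δ) * f s₀ := by gcongr

noncomputable def porousDecayExponent (c : ℝ) (d : ℕ) : ℝ :=
  Real.logb (c / 2) (1 + (c / 6) ^ d)⁻¹

theorem porousDecayExponent_pos {c : ℝ} (hc₀ : 0 < c) (hc : c < 2) (d : ℕ) :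
    0 < porousDecayExponent c d :=
  Real.logb_pos_of_base_lt_one (by positivity) (by linarith) (by positivity)
    (inv_lt_one_of_one_lt₀ (lt_add_of_pos_right 1 (by positivity)))

theorem rpow_porousDecayExponent {c : ℝ} (hc₀ : 0 < c) (hc : c < 2) (d : ℕ) :
    (c / 2) ^ porousDecayExponent c d = (1 + (c / 6) ^ d)⁻¹ :=
  Real.rpow_logb (by positivity) (by linarith) (by positivity)

def IsUniformlyPorous {X : Type*} [PseudoMetricSpace X] (c s₀ : ℝ) (F : Set X) : Prop :=
  ∀ x ∈ F, ∀ s ∈ Ioc 0 s₀, ∃ y, ball y (c * s) ⊆ ball x s ∧ Disjoint (ball y (c * s)) F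

theorem IsUniformlyPorous.mono {X : Type*} [PseudoMetricSpace X] {c s₀ s₁ : ℝ} {F : Set X}
    (hF : IsUniformlyPorous c s₀ F) (hs : s₁ ≤ s₀) : IsUniformlyPorous c s₁ F :=
  fun x hx s hs₁ ↦ hF x hx s ⟨hs₁.1, hs₁.2.trans hs⟩

theorem IsUniformlyPorous.exists_ball_near_thickening {X : Type*} [PseudoMetricSpace X]
    {c s₀ s : ℝ} {F : Set X} (hF : IsUniformlyPorous c s₀ F) (hc₀ : 0 < c) (hc : c ≤ 1)
    (hs : s ∈ Ioc 0 s₀) {z : X} (hz : z ∈ thickening (c / 2 * s) F) :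
    ∃ y, ball y (c / 2 * s) ⊆ ball z (3 * s / 2) ∧ ball y (c / 2 * s) ⊆ thickening s F ∧
      Disjoint (ball y (c / 2 * s)) (thickening (c / 2 * s) F) := by
  obtain ⟨x, hxF, hzx⟩ := mem_thickening_iff.1 hz
  obtain ⟨y, hy_sub, hy_disj⟩ := hF x hxF s hs
  have hsmall : ball y (c / 2 * s) ⊆ ball y (c * s) :=
    ball_subset_ball (by nlinarith [hs.1])
  refine ⟨y, fun w hw ↦ ?_, hsmall.trans (hy_sub.trans (ball_subset_thickening hxF s)), ?_⟩
  · have hwx := hy_sub (hsmall hw)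
    rw [mem_ball] at hwx ⊢
    have : c * s ≤ s := mul_le_of_le_one_left hs.1.le hc
    linarith [dist_triangle w x z, dist_comm x z]
  · rw [Set.disjoint_left]
    intro w hw hwF
    obtain ⟨f, hfF, hwf⟩ := mem_thickening_iff.1 hwF
    refine Set.disjoint_left.1 hy_disj ?_ hfF
    rw [mem_ball] at hw ⊢
    linarith [dist_triangle f w y, dist_comm f w]

section Volume

variable {E : Type*} [NormedAddCommGroup E] [NormedSpace ℝ E] [FiniteDimensional ℝ E]
  [MeasurableSpace E] [BorelSpace E] (μ : Measure E) [μ.IsAddHaarMeasure]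

theorem ofReal_div_pow_mul_measure_le_measure_biUnion_ball {T : Finset E} {A : Set E}
    {y : E → E} {r ρ : ℝ} (hr : 0 < r) (hρ : 0 < ρ) (hA : A ⊆ ⋃ z ∈ T, closedBall z ρ)
    (hdisj : (T : Set E).PairwiseDisjoint fun z ↦ ball (y z) r) :
    ENNReal.ofReal ((r / ρ) ^ finrank ℝ E) * μ A ≤ μ (⋃ z ∈ T, ball (y z) r) := by
  have hscale : ENNReal.ofReal ((r / ρ) ^ finrank ℝ E) * ENNReal.ofReal (ρ ^ finrank ℝ E) =
      ENNReal.ofReal (r ^ finrank ℝ E) := by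
    rw [← ENNReal.ofReal_mul (by positivity), ← mul_pow, div_mul_cancel₀ r hρ.ne']
  calc ENNReal.ofReal ((r / ρ) ^ finrank ℝ E) * μ A
      ≤ ENNReal.ofReal ((r / ρ) ^ finrank ℝ E) * ∑ z ∈ T, μ (closedBall z ρ) := by
        gcongr
        exact (measure_mono hA).trans (measure_biUnion_finset_le T _)
    _ = ∑ z ∈ T, μ (ball (y z) r) := by
        simp only [Measure.addHaar_closedBall μ _ hρ.le, Measure.addHaar_ball_of_pos μ _ hr,
          Finset.sum_const, nsmul_eq_mul, ← hscale]
        ring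
    _ = μ (⋃ z ∈ T, ball (y z) r) :=
        (measure_biUnion_finset hdisj fun _ _ ↦ measurableSet_ball).symm

theorem IsUniformlyPorous.one_add_mul_measure_thickening_le {c s₀ s : ℝ} {F : Set E}
    (hF : IsUniformlyPorous c s₀ F) (hFb : Bornology.IsBounded F) (hc₀ : 0 < c) (hc : c ≤ 1)
    (hs : s ∈ Ioc 0 s₀) :
    (1 + ENNReal.ofReal ((c / 6) ^ finrank ℝ E)) * μ (thickening (c / 2 * s) F) ≤
      μ (thickening s F) := by
  have hs_pos := hs.1
  obtain ⟨T, hTA, hTsep, hTcov⟩ :=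
    (totallyBounded_closure.1 (hFb.thickening (δ := c / 2 * s)).isCompact_closure.totallyBounded
      ).exists_finset_separated_cover (ρ := 3 * s) (by positivity)
  have hholes : ∀ z ∈ T, ∃ y, ball y (c / 2 * s) ⊆ ball z (3 * s / 2) ∧
      ball y (c / 2 * s) ⊆ thickening s F ∧
      Disjoint (ball y (c / 2 * s)) (thickening (c / 2 * s) F) :=
    fun z hz ↦ hF.exists_ball_near_thickening hc₀ hc hs (hTA hz)
  choose! y hy_near hy_thick hy_disj using hholes
  have hH_disj : (T : Set E).PairwiseDisjoint fun z ↦ ball (y z) (c / 2 * s) :=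
    fun z hz z' hz' hzz' ↦ (ball_disjoint_ball (by linarith [hTsep hz hz' hzz'])).mono
      (hy_near z hz) (hy_near z' hz')
  have hH_ge := ofReal_div_pow_mul_measure_le_measure_biUnion_ball μ (by positivity)
    (by positivity) hTcov hH_disj
  rw [show c / 2 * s / (3 * s) = c / 6 by field_simp; ring] at hH_ge
  calc (1 + ENNReal.ofReal ((c / 6) ^ finrank ℝ E)) * μ (thickening (c / 2 * s) F)
      = μ (thickening (c / 2 * s) F) +
          ENNReal.ofReal ((c / 6) ^ finrank ℝ E) * μ (thickening (c / 2 * s) F) := by ring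
    _ ≤ μ (thickening (c / 2 * s) F) + μ (⋃ z ∈ T, ball (y z) (c / 2 * s)) := by gcongr
    _ = μ (thickening (c / 2 * s) F ∪ ⋃ z ∈ T, ball (y z) (c / 2 * s)) :=
        (measure_union (disjoint_iUnion₂_right.2 fun z hz ↦ (hy_disj z hz).symm)
          (T.measurableSet_biUnion fun _ _ ↦ measurableSet_ball)).symm
    _ ≤ μ (thickening s F) :=
        measure_mono (union_subset (thickening_mono (by nlinarith) F) (iUnion₂_subset hy_thick))

theorem IsUniformlyPorous.measure_thickening_le_rpow {c s₀ : ℝ} {F : Set E}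
    (hF : IsUniformlyPorous c s₀ F) (hFb : Bornology.IsBounded F) (hc₀ : 0 < c) (hc : c ≤ 1)
    (hs₀ : 0 < s₀) {r : ℝ} (hr : r ∈ Ioc 0 s₀) :
    μ (thickening r F) ≤
      ENNReal.ofReal ((r / (c / 2 * s₀)) ^ porousDecayExponent c (finrank ℝ E)) *
        μ (thickening s₀ F) := by
  refine Monotone.le_rpow_mul_of_geometric_decay (fun _ _ h ↦ measure_mono (thickening_mono h F))
    (by positivity) (by linarith) (porousDecayExponent_pos hc₀ (by linarith) _).le hs₀
    (fun s hs ↦ ?_) hr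
  rw [rpow_porousDecayExponent hc₀ (by linarith), ENNReal.ofReal_inv_of_pos (by positivity),
    ENNReal.ofReal_add zero_le_one (by positivity), ENNReal.ofReal_one,
    ← ENNReal.mul_le_iff_le_inv (by positivity) (by finiteness)]
  exact hF.one_add_mul_measure_thickening_le μ hFb hc₀ hc hs

end Volume

theorem exists_mem_div_three_le_dist_of_le_diam {X : Type*} [PseudoMetricSpace X] {A : Set X}
    (x : X) {s : ℝ} (hs : 0 < s) (hsA : s ≤ diam A) : ∃ y ∈ A, s / 3 ≤ dist x y := by
  by_contra! h
  have : diam A ≤ 2 * s / 3 := diam_le_of_forall_dist_le (by positivity) fun a ha b hb ↦ by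
    linarith [dist_triangle_left a b x, h a ha, h b hb]
  linarith

theorem IsMUniform.exists_dist_eq_le_infDist_frontier {n : ℕ} {M : ℝ}
    {Ω : Set (EuclideanSpace ℝ (Fin n))} (hΩ : IsMUniform M Ω) {x : EuclideanSpace ℝ (Fin n)}
    (hx : x ∈ closure Ω) {s : ℝ} (hs : 0 < s) (hsΩ : s ≤ diam Ω) :
    ∃ p, dist p x = s / 6 ∧ s / (6 * M) ≤ infDist p (frontier Ω) := by
  obtain ⟨x₂, hx₂Ω, hxx₂⟩ := exists_mem_div_three_le_dist_of_le_diam x hs hsΩ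
  obtain ⟨γ, hγ_cont, hγ0, hγ1, -, -, hγ_far⟩ := hΩ.2.2 x hx x₂ (subset_closure hx₂Ω)
  have hmid : s / 6 ∈ Icc (dist (γ 0) x) (dist (γ 1) x) := by
    rw [hγ0, hγ1, dist_self, dist_comm]
    constructor <;> linarith
  obtain ⟨t, ht, hγt : dist (γ t) x = s / 6⟩ := intermediate_value_Icc zero_le_one
    ((continuous_id.dist continuous_const).comp_continuousOn hγ_cont) hmid
  have hmin : min (dist (γ t) x) (dist (γ t) x₂) = s / 6 := by
    rw [hγt, min_eq_left]
    linarith [dist_triangle x (γ t) x₂, dist_comm x (γ t)]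
  refine ⟨γ t, hγt, ?_⟩
  calc s / (6 * M) = 1 / M * min (dist (γ t) x) (dist (γ t) x₂) := by rw [hmin]; ring
    _ ≤ infDist (γ t) (frontier Ω) := hγ_far t ht

theorem IsMUniform.isUniformlyPorous_frontier {n : ℕ} {M : ℝ} (hM : 1 ≤ M)
    {Ω : Set (EuclideanSpace ℝ (Fin n))} (hΩ : IsMUniform M Ω) :
    IsUniformlyPorous (1 / (6 * M)) (diam Ω) (frontier Ω) := by
  intro x hx s hs
  obtain ⟨p, hpx, hp⟩ :=
    hΩ.exists_dist_eq_le_infDist_frontier (frontier_subset_closure hx) hs.1 hs.2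
  rw [one_div_mul_eq_div]
  have hr : s / (6 * M) ≤ s / 6 :=
    div_le_div_of_nonneg_left hs.1.le (by positivity) (by linarith)
  refine ⟨p, fun w hw ↦ ?_, disjoint_ball_infDist.mono_left (ball_subset_ball hp)⟩
  rw [mem_ball] at hw ⊢
  linarith [dist_triangle w p x, hs.1]

theorem IsMUniform.volume_thickening_frontier_le {n : ℕ} {M R s₀ : ℝ} (hM : 1 ≤ M)
    {Ω : Set (EuclideanSpace ℝ (Fin n))} (hΩ : IsMUniform M Ω) (hΩR : Ω ⊆ ball 0 R)
    (hs₀ : 0 < s₀) (hs₀1 : s₀ ≤ 1) (hs₀Ω : s₀ ≤ diam Ω) {r : ℝ} (hr : r ∈ Ioc 0 1) :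
    volume (thickening r (frontier Ω)) ≤
      ENNReal.ofReal ((r / (1 / (6 * M) / 2 * s₀)) ^ porousDecayExponent (1 / (6 * M)) n) *
        volume (ball (0 : EuclideanSpace ℝ (Fin n)) (R + 1)) := by
  have hc₀ : 0 < 1 / (6 * M) := by positivity
  have hc : 1 / (6 * M) ≤ 1 := by rw [div_le_one (by positivity)]; linarith
  have hF_sub : frontier Ω ⊆ closedBall 0 R :=
    frontier_subset_closure.trans ((closure_mono hΩR).trans closure_ball_subset_closedBall)
  have hsub : ∀ t ≤ 1, thickening t (frontier Ω) ⊆ ball 0 (R + 1) := fun t ht z hz ↦ by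
    obtain ⟨w, hw, hzw⟩ := mem_thickening_iff.1 hz
    rw [mem_ball]
    linarith [dist_triangle z w 0, mem_closedBall.1 (hF_sub hw)]
  rcases le_or_gt r s₀ with hrs | hrs
  · have := ((hΩ.isUniformlyPorous_frontier hM).mono hs₀Ω).measure_thickening_le_rpow volume
      (isBounded_closedBall.subset hF_sub) hc₀ hc hs₀ ⟨hr.1, hrs⟩
    rw [finrank_euclideanSpace_fin] at this
    exact this.trans (by gcongr; exact hsub s₀ hs₀1)
  · refine (measure_mono (hsub r hr.2)).trans (le_mul_of_one_le_left' ?_)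
    refine ENNReal.one_le_ofReal.2
      (Real.one_le_rpow ?_ (porousDecayExponent_pos hc₀ (by linarith) n).le)
    rw [one_le_div (by positivity)]
    nlinarith

theorem volume_boundary_neighborhood_MUniform (n : ℕ) (M : ℝ) (hM : 1 < M) :
    ∃ δ : ℝ, δ ∈ Set.Ioc (0:ℝ) 1 ∧ ∀ c₀ R : ℝ, 0 < c₀ → 0 < R →
      ∃ C : ℝ, 0 < C ∧ ∀ Ω : Set (EuclideanSpace ℝ (Fin n)),
        IsMUniform M Ω → Ω ⊆ Metric.ball 0 R → c₀ ≤ Metric.diam Ω →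
        ∀ r ∈ Set.Ioc (0:ℝ) 1,
          volume (Metric.thickening r (frontier Ω)) ≤ ENNReal.ofReal (C * r ^ δ) := by
  set δ₀ := porousDecayExponent (1 / (6 * M)) n
  have hδ₀ : 0 < δ₀ :=
    porousDecayExponent_pos (by positivity) (by rw [div_lt_iff₀]; all_goals linarith) n
  refine ⟨min δ₀ 1, ⟨lt_min hδ₀ one_pos, min_le_right _ _⟩, fun c₀ R hc₀ _ ↦ ?_⟩
  set q := 1 / (6 * M) / 2 * min c₀ 1
  set V := volume (ball (0 : EuclideanSpace ℝ (Fin n)) (R + 1))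
  have hq : 0 < q := by positivity
  refine ⟨(V.toReal + 1) / q ^ δ₀, div_pos (by positivity) (Real.rpow_pos_of_pos hq _),
    fun Ω hΩ hΩR hdiam r hr ↦ ?_⟩
  have hV : V ≤ ENNReal.ofReal (V.toReal + 1) :=
    (ENNReal.le_ofReal_iff_toReal_le measure_ball_lt_top.ne (by positivity)).2 (by linarith)
  have hrδ : r ^ δ₀ ≤ r ^ min δ₀ 1 := Real.rpow_le_rpow_of_exponent_ge hr.1 hr.2 (min_le_left _ _)
  calc volume (thickening r (frontier Ω)) ≤ ENNReal.ofReal ((r / q) ^ δ₀) * V :=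
        hΩ.volume_thickening_frontier_le hM.le hΩR (lt_min hc₀ one_pos) (min_le_right _ _)
          ((min_le_left _ _).trans hdiam) hr
    _ ≤ ENNReal.ofReal ((r / q) ^ δ₀) * ENNReal.ofReal (V.toReal + 1) := by gcongr
    _ = ENNReal.ofReal ((V.toReal + 1) / q ^ δ₀ * r ^ δ₀) := by
        rw [← ENNReal.ofReal_mul (Real.rpow_nonneg (div_nonneg hr.1.le hq.le) _),
          Real.div_rpow hr.1.le hq.le]
        ring_nf
    _ ≤ ENNReal.ofReal ((V.toReal + 1) / q ^ δ₀ * r ^ min δ₀ 1) :=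
        ENNReal.ofReal_le_ofReal (by gcongr)
end

section
/- Let Ω = {x ∈ ℝ² : 1 < |x| < 2} and 0 < m < 3π − 4π ln 2. Set c₁ = (m + 3π)/(2m + 4π ln 2), c₂ = (2m − (m − π) ln 2)/(2m + 4π ln 2), and u(x) = −|x|²/4 + c₁ ln|x| + c₂. Then u > 0 on Ω ∪ ∂B₁, u = 0 on ∂B₂, −Δu = 1 in Ω, ∂u/∂ν = −(1/m)∫_{∂B₁} u dσ on ∂B₁, and ∂u/∂ν > −(1/m)∫_{∂Ω} u dσ on ∂B₂. -/
/-!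
Write `u x = v ‖x‖` with `v t = -t²/4 + c₁ log t + c₂`. Since `log ‖x‖` is harmonic in the plane,
`Δu = Δ(-‖x‖²/4) = -1`, and `∇u x = v' ‖x‖ • x / ‖x‖`. The constants make `v 2 = 0`, and
`v 1 > 0` because `log 2 < 3/2`; as `v` is concave, `u > 0` on `1 ≤ ‖x‖ < 2`.

A function constant on a circle of radius `r` integrates to `2πr` times that constant against
`μH[1]`: the bound `≤ 2πr` comes from the `r`-Lipschitz parametrisation `circleMap`, and `≥` from
cutting the circle into `n` arcs, each of measure at least its chord (project a connected set by
`dist · x`), and letting `n → ∞`. The two boundary conditions are then identities between the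
explicit constants, the strict one on `∂B₂` being `3π - m - 4π log 2 > 0`.
-/

open MeasureTheory Metric Set

/-- The Laplacian of `u : ℝⁿ → ℝ`, as the sum of the pure second partial derivatives. -/
noncomputable def lap {n : ℕ} (u : EuclideanSpace ℝ (Fin n) → ℝ)
    (x : EuclideanSpace ℝ (Fin n)) : ℝ :=
  ∑ i : Fin n,
    fderiv ℝ (fun y => fderiv ℝ u y (EuclideanSpace.single i 1)) x (EuclideanSpace.single i 1)

open Real Filter Topology
open scoped ENNReal

theorem edist_le_hausdorffMeasure_one_of_isPreconnected {X : Type*} [MetricSpace X]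
    [MeasurableSpace X] [BorelSpace X] {s : Set X} (hs : IsPreconnected s) {x y : X}
    (hx : x ∈ s) (hy : y ∈ s) : edist x y ≤ μH[1] s := by
  have hp : LipschitzWith 1 (dist · x) := LipschitzWith.dist_left x
  have hIcc : Icc 0 (dist y x) ⊆ (dist · x) '' s :=
    (hs.image _ hp.continuous.continuousOn).Icc_subset ⟨x, hx, dist_self x⟩ ⟨y, hy, rfl⟩
  calc edist x y = μH[1] (Icc 0 (dist y x)) := by
        rw [hausdorffMeasure_real, Real.volume_Icc, sub_zero, dist_comm, edist_dist]
    _ ≤ μH[1] ((dist · x) '' s) := measure_mono hIcc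
    _ ≤ μH[1] s := by simpa using hp.hausdorffMeasure_image_le zero_le_one s

theorem dist_circleMap_zero_add (r a δ : ℝ) :
    dist (circleMap 0 r a) (circleMap 0 r (a + δ)) =
      dist (circleMap 0 r 0) (circleMap 0 r δ) := by
  have h (θ : ℝ) : circleMap 0 r (a + θ) = circleMap 0 1 a * circleMap 0 r θ := by
    rw [circleMap_zero_mul, one_mul]
  have h₀ := h 0
  rw [add_zero] at h₀
  rw [h, h₀, dist_eq_norm, dist_eq_norm, ← mul_sub, norm_mul, norm_circleMap_zero, abs_one,
    one_mul]

theorem edist_circleMap_le_hausdorffMeasure_arc (r a : ℝ) {δ : ℝ} (hδ : 0 ≤ δ) :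
    edist (circleMap 0 r 0) (circleMap 0 r δ) ≤ μH[1] (circleMap 0 r '' Ioc a (a + δ)) := by
  have : NullSingletonClass (μH[1] : Measure ℂ) :=
    Measure.nullSingletonClass_hausdorff ℂ one_pos
  rw [edist_dist, ← dist_circleMap_zero_add r a, ← edist_dist,
    ← measure_congr (insert_ae_eq_self (μ := μH[1]) (circleMap 0 r a) _), ← image_insert_eq,
    Ioc_insert_left (by linarith)]
  exact edist_le_hausdorffMeasure_one_of_isPreconnected
    (isPreconnected_Icc.image _ (continuous_circleMap 0 r).continuousOn)
    (mem_image_of_mem _ (left_mem_Icc.2 (by linarith)))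
    (mem_image_of_mem _ (right_mem_Icc.2 (by linarith)))

theorem nat_mul_edist_circleMap_le_hausdorffMeasure_sphere {r : ℝ} (hr : 0 < r) (n : ℕ) :
    n * edist (circleMap 0 r 0) (circleMap 0 r (2 * π / n)) ≤ μH[1] (sphere (0 : ℂ) r) := by
  set δ := 2 * π / n
  rcases n.eq_zero_or_pos with rfl | hn
  · simp
  have hδ : 0 ≤ δ := by positivity
  have hnδ : n * δ = 2 * π := mul_div_cancel₀ _ (by positivity)
  let arc (k : ℕ) : Set ℂ := circleMap 0 r '' Ioc (k * δ) (k * δ + δ)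
  have harc_sub (k : ℕ) (hk : k ∈ Finset.range n) :
      Ioc (k * δ) (k * δ + δ) ⊆ Ioc 0 (2 * π) := by
    have : (k : ℝ) + 1 ≤ n := by exact_mod_cast Finset.mem_range.1 hk
    exact Ioc_subset_Ioc (by positivity) (by nlinarith)
  have hinj : InjOn (circleMap 0 r) (Ioc 0 (2 * π)) := by
    simpa [uIoc_of_le two_pi_pos.le] using injOn_circleMap_of_abs_sub_le (c := 0) hr.ne'
      (a := 0) (b := 2 * π) (by simp [abs_of_pos two_pi_pos])
  have hdisj : (Finset.range n : Set ℕ).PairwiseDisjoint arc := by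
    intro i hi j hj hij
    refine Disjoint.image ?_ hinj (harc_sub i hi) (harc_sub j hj)
    simpa [add_one_mul] using
      pairwise_disjoint_Ioc_add_zsmul (0 : ℝ) δ (Int.natCast_inj.not.2 hij)
  have hmeas (k : ℕ) (_ : k ∈ Finset.range n) : MeasurableSet (arc k) :=
    measurableSet_Ioc.image_of_continuousOn_injOn (continuous_circleMap 0 r).continuousOn
      (hinj.mono (harc_sub k ‹_›))
  calc (n : ℝ≥0∞) * edist (circleMap 0 r 0) (circleMap 0 r δ)
      = ∑ k ∈ Finset.range n, edist (circleMap 0 r 0) (circleMap 0 r δ) := by simp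
    _ ≤ ∑ k ∈ Finset.range n, μH[1] (arc k) :=
        Finset.sum_le_sum fun k _ => edist_circleMap_le_hausdorffMeasure_arc r _ hδ
    _ = μH[1] (⋃ k ∈ Finset.range n, arc k) := (measure_biUnion_finset hdisj hmeas).symm
    _ ≤ μH[1] (sphere (0 : ℂ) r) := by
        refine measure_mono (iUnion₂_subset fun k _ => ?_)
        rintro _ ⟨θ, -, rfl⟩
        exact circleMap_mem_sphere 0 hr.le θ

theorem tendsto_nat_mul_dist_circleMap (r : ℝ) :
    Tendsto (fun n : ℕ => n * dist (circleMap 0 r 0) (circleMap 0 r (2 * π / n))) atTop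
      (𝓝 (2 * π * |r|)) := by
  have hslope := (hasDerivAt_iff_tendsto_slope.1 (hasDerivAt_circleMap 0 r 0)).norm
  rw [norm_mul, norm_circleMap_zero, Complex.norm_I, mul_one] at hslope
  have hstep : Tendsto (fun n : ℕ => 2 * π / n) atTop (𝓝[≠] 0) :=
    tendsto_nhdsWithin_of_tendsto_nhds_of_eventually_within _
      (tendsto_const_div_atTop_nhds_zero_nat _)
      ((eventually_ne_atTop 0).mono fun n hn => by simp [hn, pi_ne_zero])
  refine ((hslope.comp hstep).const_mul (2 * π)).congr' ?_
  filter_upwards [eventually_ne_atTop 0] with n hn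
  simp only [Function.comp_apply, slope_def_module, sub_zero, norm_smul, norm_inv,
    Real.norm_eq_abs, abs_of_pos (show (0 : ℝ) < 2 * π / n by positivity), ← dist_eq_norm,
    dist_comm]
  field_simp

theorem Complex.hausdorffMeasure_one_sphere_zero {r : ℝ} (hr : 0 < r) :
    μH[1] (sphere (0 : ℂ) r) = ENNReal.ofReal (2 * π * r) := by
  refine le_antisymm ?_ ?_
  · calc μH[1] (sphere (0 : ℂ) r) = μH[1] (circleMap 0 r '' Ioc 0 (2 * π)) := by
          rw [image_circleMap_Ioc, abs_of_pos hr]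
      _ ≤ Real.nnabs r ^ (1 : ℝ) * μH[1] (Ioc 0 (2 * π)) :=
          (lipschitzWith_circleMap 0 r).hausdorffMeasure_image_le zero_le_one _
      _ = ENNReal.ofReal (2 * π * r) := by
          rw [ENNReal.rpow_one, hausdorffMeasure_real, Real.volume_Ioc, sub_zero,
            Real.nnabs_of_nonneg hr.le, ENNReal.ofReal_mul' hr.le, mul_comm]
          rfl
  · have hlim := (ENNReal.continuous_ofReal.tendsto _).comp (tendsto_nat_mul_dist_circleMap r)
    rw [abs_of_pos hr] at hlim
    refine le_of_tendsto' hlim fun n => ?_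
    simpa [ENNReal.ofReal_mul, edist_dist] using
      nat_mul_edist_circleMap_le_hausdorffMeasure_sphere hr n

theorem EuclideanSpace.hausdorffMeasure_one_sphere_fin_two {r : ℝ} (hr : 0 < r) :
    μH[1] (sphere (0 : EuclideanSpace ℝ (Fin 2)) r) = ENNReal.ofReal (2 * π * r) := by
  let e := Complex.orthonormalBasisOneI.repr
  rw [← Complex.hausdorffMeasure_one_sphere_zero hr,
    ← e.isometry.hausdorffMeasure_image (Or.inl zero_le_one), e.image_sphere, map_zero]

theorem EuclideanSpace.setIntegral_sphere_fin_two_comp_norm (f : ℝ → ℝ) {r : ℝ}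
    (hr : 0 < r) :
    ∫ y in sphere (0 : EuclideanSpace ℝ (Fin 2)) r, f ‖y‖ ∂μH[1] = 2 * π * r * f r := by
  rw [setIntegral_congr_fun isClosed_sphere.measurableSet (g := fun _ => f r)
      fun y hy => by rw [mem_sphere_zero_iff_norm.1 hy], setIntegral_const, measureReal_def,
    EuclideanSpace.hausdorffMeasure_one_sphere_fin_two hr, ENNReal.toReal_ofReal (by positivity),
    smul_eq_mul]

section NormSq

variable {E : Type*} [NormedAddCommGroup E] [InnerProductSpace ℝ E] {g : ℝ → ℝ} {g' : ℝ}
  {x : E}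

theorem HasDerivAt.hasFDerivAt_comp_norm_sq (hg : HasDerivAt g g' (‖x‖ ^ 2)) :
    HasFDerivAt (fun y => g (‖y‖ ^ 2)) ((2 * g') • innerSL ℝ x) x :=
  (hg.comp_hasFDerivAt x (hasStrictFDerivAt_norm_sq x).hasFDerivAt).congr_fderiv <| by
    ext v
    simp only [smul_apply, coe_innerSL_apply, nsmul_eq_mul, Nat.cast_ofNat, smul_eq_mul]
    ring

theorem HasDerivAt.hasGradientAt_comp_norm_sq [CompleteSpace E]
    (hg : HasDerivAt g g' (‖x‖ ^ 2)) :
    HasGradientAt (fun y => g (‖y‖ ^ 2)) ((2 * g') • x) x := by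
  rw [hasGradientAt_iff_hasFDerivAt]
  exact hg.hasFDerivAt_comp_norm_sq.congr_fderiv (by ext; simp)

end NormSq

theorem lap_comp_norm_sq {n : ℕ} {g g' : ℝ → ℝ} {g'' : ℝ} {x : EuclideanSpace ℝ (Fin n)}
    (hg : ∀ᶠ s in 𝓝 (‖x‖ ^ 2), HasDerivAt g (g' s) s) (hg' : HasDerivAt g' g'' (‖x‖ ^ 2)) :
    lap (fun y => g (‖y‖ ^ 2)) x = 4 * ‖x‖ ^ 2 * g'' + 2 * n * g' (‖x‖ ^ 2) := by
  have hpartial (i : Fin n) :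
      (fun y => fderiv ℝ (fun y => g (‖y‖ ^ 2)) y (EuclideanSpace.single i 1)) =ᶠ[𝓝 x]
        fun y => 2 * g' (‖y‖ ^ 2) * y i := by
    filter_upwards [((continuous_norm.pow 2).tendsto x).eventually hg] with y hy
    simp [hy.hasFDerivAt_comp_norm_sq.fderiv, EuclideanSpace.inner_single_right]
  have hsecond (i : Fin n) :
      fderiv ℝ (fun y => fderiv ℝ (fun y => g (‖y‖ ^ 2)) y (EuclideanSpace.single i 1)) x
        (EuclideanSpace.single i 1) = 2 * g' (‖x‖ ^ 2) + 4 * g'' * x i ^ 2 := by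
    have h : HasFDerivAt (fun y : EuclideanSpace ℝ (Fin n) => 2 * g' (‖y‖ ^ 2) * y i) _ x :=
      (hg'.const_mul 2).hasFDerivAt_comp_norm_sq.mul
        (EuclideanSpace.proj i : EuclideanSpace ℝ (Fin n) →L[ℝ] ℝ).hasFDerivAt
    rw [(hpartial i).fderiv_eq, h.fderiv]
    simp only [add_apply, smul_apply, PiLp.proj_apply, PiLp.single_eq_same, smul_eq_mul, mul_one,
      coe_innerSL_apply, EuclideanSpace.inner_single_right, ringHom_apply, one_mul]
    ring
  rw [lap, Finset.sum_congr rfl fun i _ => hsecond i]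
  simp only [Finset.sum_add_distrib, ← Finset.mul_sum, EuclideanSpace.norm_sq_eq,
    Real.norm_eq_abs, sq_abs, Finset.sum_const, Finset.card_univ, Fintype.card_fin, nsmul_eq_mul]
  ring

theorem ConcaveOn.pos_of_pos_of_nonneg {f : ℝ → ℝ} {a b t : ℝ} (hf : ConcaveOn ℝ (Icc a b) f)
    (ha : 0 < f a) (hb : 0 ≤ f b) (ht : t ∈ Ico a b) : 0 < f t := by
  rcases ht.1.eq_or_lt with rfl | hat
  · exact ha
  have hab : 0 < b - a := by linarith [ht.2]
  have hwa : 0 < (b - t) / (b - a) := div_pos (sub_pos.2 ht.2) hab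
  have hwb : 0 < (t - a) / (b - a) := div_pos (sub_pos.2 hat) hab
  have key := hf.2 (left_mem_Icc.2 (by linarith)) (right_mem_Icc.2 (by linarith)) hwa.le hwb.le
    (by field_simp; ring)
  rw [smul_eq_mul, smul_eq_mul, smul_eq_mul, smul_eq_mul,
    show (b - t) / (b - a) * a + (t - a) / (b - a) * b = t by field_simp; ring] at key
  nlinarith

/-- The radial solutions of `-Δu = 1` in the punctured plane, as functions of the radius. -/
noncomputable def radialTorsion (c₁ c₂ t : ℝ) : ℝ := -t ^ 2 / 4 + c₁ * log t + c₂

section RadialTorsion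

variable (c₁ c₂ : ℝ)

theorem radialTorsion_eq_comp_sq (t : ℝ) :
    radialTorsion c₁ c₂ t = -t ^ 2 / 4 + c₁ / 2 * log (t ^ 2) + c₂ := by
  rw [radialTorsion, log_pow]
  push_cast
  ring

theorem hasDerivAt_neg_div_four_add_mul_log {s : ℝ} (hs : s ≠ 0) :
    HasDerivAt (fun s => -s / 4 + c₁ / 2 * log s + c₂) (c₁ / (2 * s) - 1 / 4) s :=
  ((((hasDerivAt_id' s).neg.div_const 4).add ((hasDerivAt_log hs).const_mul (c₁ / 2))).add_const
    c₂).congr_deriv (by field_simp; ring)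

theorem hasDerivAt_div_two_mul_sub_quarter {s : ℝ} (hs : s ≠ 0) :
    HasDerivAt (fun s => c₁ / (2 * s) - 1 / 4) (-c₁ / (2 * s ^ 2)) s :=
  (((hasDerivAt_const s c₁).div ((hasDerivAt_id' s).const_mul 2) (by simpa using hs)).sub_const
    (1 / 4)).congr_deriv (by field_simp; ring)

theorem hasGradientAt_radialTorsion_norm {E : Type*} [NormedAddCommGroup E]
    [InnerProductSpace ℝ E] [CompleteSpace E] {x : E} (hx : x ≠ 0) :
    HasGradientAt (fun y => radialTorsion c₁ c₂ ‖y‖) ((c₁ / ‖x‖ ^ 2 - 1 / 2) • x) x := by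
  have hx2 : ‖x‖ ^ 2 ≠ 0 := by simpa using hx
  have h := (hasDerivAt_neg_div_four_add_mul_log c₁ c₂ hx2).hasGradientAt_comp_norm_sq
  simp only [← radialTorsion_eq_comp_sq] at h
  rwa [show 2 * (c₁ / (2 * ‖x‖ ^ 2) - 1 / 4) = c₁ / ‖x‖ ^ 2 - 1 / 2 by field_simp; ring] at h

theorem lap_radialTorsion_norm {x : EuclideanSpace ℝ (Fin 2)} (hx : x ≠ 0) :
    lap (fun y => radialTorsion c₁ c₂ ‖y‖) x = -1 := by
  have hx2 : ‖x‖ ^ 2 ≠ 0 := by simpa using hx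
  have h := lap_comp_norm_sq (g := fun s => -s / 4 + c₁ / 2 * log s + c₂)
    (g' := fun s => c₁ / (2 * s) - 1 / 4) ?_ (hasDerivAt_div_two_mul_sub_quarter c₁ hx2)
  · simp only [← radialTorsion_eq_comp_sq] at h
    rw [h]
    field_simp
    ring
  · filter_upwards [isOpen_ne.mem_nhds hx2] with s hs
    exact hasDerivAt_neg_div_four_add_mul_log c₁ c₂ hs

end RadialTorsion

theorem concaveOn_radialTorsion {c₁ : ℝ} (c₂ : ℝ) (hc₁ : 0 ≤ c₁) :
    ConcaveOn ℝ (Ioi 0) (radialTorsion c₁ c₂) := by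
  have hsq : ConvexOn ℝ (Ioi 0) fun t : ℝ => (1 / 4 : ℝ) • t ^ 2 :=
    ((Even.convexOn_pow even_two).subset (subset_univ _) (convex_Ioi 0)).smul (by norm_num)
  refine ((hsq.neg.add (strictConcaveOn_log_Ioi.concaveOn.smul hc₁)).add_const c₂).congr
    fun t _ => ?_
  simp only [radialTorsion, Pi.add_apply, Pi.neg_apply, smul_eq_mul]
  ring

theorem radialTorsion_pos {c₁ c₂ a b t : ℝ} (hc₁ : 0 ≤ c₁) (ha : 0 < a)
    (hva : 0 < radialTorsion c₁ c₂ a) (hvb : 0 ≤ radialTorsion c₁ c₂ b) (ht : t ∈ Ico a b) :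
    0 < radialTorsion c₁ c₂ t :=
  ((concaveOn_radialTorsion c₂ hc₁).subset (fun _ hs => ha.trans_le hs.1)
    (convex_Icc a b)).pos_of_pos_of_nonneg hva hvb ht

theorem annulus_example (m : ℝ) (hm1 : 0 < m)
    (hm2 : m < 3 * Real.pi - 4 * Real.pi * Real.log 2) :
    let c₁ := (m + 3 * Real.pi) / (2 * m + 4 * Real.pi * Real.log 2)
    let c₂ := (2 * m - (m - Real.pi) * Real.log 2) / (2 * m + 4 * Real.pi * Real.log 2)
    let u : EuclideanSpace ℝ (Fin 2) → ℝ := fun x => -‖x‖ ^ 2 / 4 + c₁ * Real.log ‖x‖ + c₂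
    let Ω : Set (EuclideanSpace ℝ (Fin 2)) := {x | 1 < ‖x‖ ∧ ‖x‖ < 2}
    (∀ x, (x ∈ Ω ∨ x ∈ Metric.sphere (0 : EuclideanSpace ℝ (Fin 2)) 1) → 0 < u x) ∧
    (∀ x ∈ Metric.sphere (0 : EuclideanSpace ℝ (Fin 2)) 2, u x = 0) ∧
    (∀ x ∈ Ω, lap u x = -1) ∧
    (∀ x ∈ Metric.sphere (0 : EuclideanSpace ℝ (Fin 2)) 1,
      (inner ℝ (gradient u x) (-x) : ℝ) =
        -(1 / m) * ∫ y in Metric.sphere (0 : EuclideanSpace ℝ (Fin 2)) 1, u y ∂μH[(1:ℝ)]) ∧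
    (∀ x ∈ Metric.sphere (0 : EuclideanSpace ℝ (Fin 2)) 2,
      (inner ℝ (gradient u x) ((2:ℝ)⁻¹ • x) : ℝ) >
        -(1 / m) * ((∫ y in Metric.sphere (0 : EuclideanSpace ℝ (Fin 2)) 1, u y ∂μH[(1:ℝ)]) +
          (∫ y in Metric.sphere (0 : EuclideanSpace ℝ (Fin 2)) 2, u y ∂μH[(1:ℝ)]))) := by
  intro c₁ c₂ u Ω
  have hD : 0 < 2 * m + 4 * π * log 2 := by have := log_pos one_lt_two; positivity
  have hv₁ : 0 < radialTorsion c₁ c₂ 1 := by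
    have hval : radialTorsion c₁ c₂ 1 = m * (6 - 4 * log 2) / (4 * (2 * m + 4 * π * log 2)) := by
      simp only [radialTorsion, c₁, c₂, log_one]
      field_simp
      ring
    have := log_two_lt_d9
    rw [hval]
    exact div_pos (mul_pos hm1 (by linarith)) (by positivity)
  have hv₂ : radialTorsion c₁ c₂ 2 = 0 := by
    simp only [radialTorsion, c₁, c₂]
    field_simp
    ring
  have hgrad {x : EuclideanSpace ℝ (Fin 2)} (hx : x ≠ 0) :
      gradient u x = (c₁ / ‖x‖ ^ 2 - 1 / 2) • x :=
    (hasGradientAt_radialTorsion_norm c₁ c₂ hx).gradient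
  have hint {r : ℝ} (hr : 0 < r) :
      ∫ y in sphere 0 r, u y ∂μH[1] = 2 * π * r * radialTorsion c₁ c₂ r :=
    EuclideanSpace.setIntegral_sphere_fin_two_comp_norm (radialTorsion c₁ c₂) hr
  refine ⟨?_, fun x hx => ?_, fun x hx => ?_, fun x hx => ?_, fun x hx => ?_⟩
  · rintro x (⟨h₁, h₂⟩ | h)
    · exact radialTorsion_pos (by positivity) one_pos hv₁ hv₂.ge ⟨h₁.le, h₂⟩
    · exact radialTorsion_pos (by positivity) one_pos hv₁ hv₂.ge
        (by simp [mem_sphere_zero_iff_norm.1 h])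
  · change radialTorsion c₁ c₂ ‖x‖ = 0
    rw [mem_sphere_zero_iff_norm.1 hx, hv₂]
  · exact lap_radialTorsion_norm c₁ c₂ (norm_pos_iff.1 (one_pos.trans hx.1))
  · rw [mem_sphere_zero_iff_norm] at hx
    rw [hgrad (norm_ne_zero_iff.1 (by simp [hx])), hint one_pos, inner_neg_right,
      real_inner_smul_left, real_inner_self_eq_norm_sq, hx]
    simp only [radialTorsion, c₁, c₂, log_one]
    field_simp
    ring
  · rw [mem_sphere_zero_iff_norm] at hx
    rw [hgrad (norm_ne_zero_iff.1 (by simp [hx])), hint one_pos, hint two_pos, hv₂,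
      real_inner_smul_left, real_inner_smul_right, real_inner_self_eq_norm_sq, hx, gt_iff_lt,
      ← sub_pos]
    have key : 0 < 3 * (3 * π - m - 4 * π * log 2) / (2 * (2 * m + 4 * π * log 2)) := by
      apply div_pos <;> linarith
    convert key using 1
    simp only [radialTorsion, c₁, c₂, log_one]
    field_simp
    ring
end
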